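/- In the Lorentz mirror model on Z², for every density p ∈ (0,1] of mirrors and every n ≥ 1, the probability that the light ray started at the origin reaches the complement of the box Q(n) = [-n,n]² is at least 1/(2n+1). -/

import Mathlib

/-- Directions of travel of the light ray. -/
inductive Dir | N | E | S | W
deriving DecidableEq

/-- Mirror designation at a vertex: no mirror, north-west mirror, or north-east mirror. -/
inductive Mirror | no | NW | NE
deriving DecidableEq

/-- Reflection of a direction by a mirror (no mirror: straight). -/
def reflect : Mirror → Dir → Dir
  | .no, d => d
  | .NW, .E => .N
  | .NW, .N => .E
  | .NW, .W => .S
  | .NW, .S => .W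
  | .NE, .E => .S
  | .NE, .S => .E
  | .NE, .W => .N
  | .NE, .N => .W

/-- One step in a direction on the cylinder `ℤ × ZMod m`. -/
def moveC {m : ℕ} (v : ℤ × ZMod m) : Dir → ℤ × ZMod m
  | .N => (v.1, v.2 + 1)
  | .S => (v.1, v.2 - 1)
  | .E => (v.1 + 1, v.2)
  | .W => (v.1 - 1, v.2)

/-- The step map of the mirror model on the cylinder: move one step, then reflect
at the mirror (if any) at the new vertex. -/
def stepC {m : ℕ} (c : ℤ × ZMod m → Mirror) (s : (ℤ × ZMod m) × Dir) :
    (ℤ × ZMod m) × Dir :=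
  (moveC s.1 s.2, reflect (c (moveC s.1 s.2)) s.2)
/-- One step in a direction on `ℤ × ℤ`. -/
def moveZ (v : ℤ × ℤ) : Dir → ℤ × ℤ
  | .N => (v.1, v.2 + 1)
  | .S => (v.1, v.2 - 1)
  | .E => (v.1 + 1, v.2)
  | .W => (v.1 - 1, v.2)

/-- The step map of the mirror model on `ℤ²`. -/
def stepZ (c : ℤ × ℤ → Mirror) (s : (ℤ × ℤ) × Dir) : (ℤ × ℤ) × Dir :=
  (moveZ s.1 s.2, reflect (c (moveZ s.1 s.2)) s.2)

instance : MeasurableSpace Mirror := ⊤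

open MeasureTheory

/-- The box `Q(n) = [-n,n]²` in `ℤ²`. -/
def Q (n : ℕ) : Set (ℤ × ℤ) := {v | |v.1| ≤ (n : ℤ) ∧ |v.2| ≤ (n : ℤ)}

-- ======= auxiliary combinatorics =======

instance : Fintype Dir := ⟨{.N, .E, .S, .W}, by intro x; cases x <;> simp⟩
instance : Fintype Mirror := ⟨{.no, .NW, .NE}, by intro x; cases x <;> simp⟩

def opp : Dir → Dir
  | .N => .S
  | .S => .N
  | .E => .W
  | .W => .E

@[simp] lemma opp_opp (d : Dir) : opp (opp d) = d := by cases d <;> rfl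

lemma opp_ne (d : Dir) : opp d ≠ d := by cases d <;> decide

lemma reflect_reflect (md : Mirror) (d : Dir) : reflect md (reflect md d) = d := by
  cases md <;> cases d <;> rfl

lemma reflect_opp_reflect (md : Mirror) (d : Dir) :
    reflect md (opp (reflect md d)) = opp d := by
  cases md <;> cases d <;> rfl

lemma reflect_opp_ne (md : Mirror) (d : Dir) : reflect md (opp d) ≠ d := by
  cases md <;> cases d <;> decide

@[simp] lemma moveC_opp {m : ℕ} (v : ℤ × ZMod m) (d : Dir) :
    moveC (moveC v d) (opp d) = v := by
  cases d <;> simp [moveC, opp] <;> ring_nf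

section Cyl
variable {m : ℕ} (c : ℤ × ZMod m → Mirror)

lemma stepC_injective : Function.Injective (stepC c) := by
  intro ⟨v₁, d₁⟩ ⟨v₂, d₂⟩ h
  simp only [stepC, Prod.mk.injEq] at h
  obtain ⟨hv, hd⟩ := h
  have hd' : d₁ = d₂ := by
    have := congrArg (reflect (c (moveC v₁ d₁))) hd
    rwa [reflect_reflect, hv, reflect_reflect] at this
  subst hd'
  have := congrArg (fun w => moveC w (opp d₁)) hv
  simp only [moveC_opp] at this
  exact Prod.ext this rfl

/-- time reversal -/
def rho {m : ℕ} (s : (ℤ × ZMod m) × Dir) : (ℤ × ZMod m) × Dir :=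
  (moveC s.1 s.2, opp s.2)

@[simp] lemma rho_rho {m : ℕ} (s : (ℤ × ZMod m) × Dir) : rho (rho s) = s := by
  cases s; simp [rho]

lemma step_rho_step (s : (ℤ × ZMod m) × Dir) :
    stepC c (rho (stepC c s)) = rho s := by
  obtain ⟨v, d⟩ := s
  simp only [stepC, rho, moveC_opp, reflect_opp_reflect]

lemma iter_rho_iter (k : ℕ) (s : (ℤ × ZMod m) × Dir) :
    (stepC c)^[k] (rho ((stepC c)^[k] s)) = rho s := by
  induction k generalizing s with
  | zero => rfl
  | succ k ih =>
      rw [Function.iterate_succ_apply, Function.iterate_succ_apply',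
        step_rho_step, ih]

lemma step_rho_ne (s : (ℤ × ZMod m) × Dir) : stepC c (rho s) ≠ s := by
  obtain ⟨v, d⟩ := s
  simp only [stepC, rho, moveC_opp, ne_eq, Prod.mk.injEq, not_and]
  intro _
  exact reflect_opp_ne _ _

lemma rho_ne (s : (ℤ × ZMod m) × Dir) : rho s ≠ s := by
  obtain ⟨v, d⟩ := s
  simp only [rho, ne_eq, Prod.mk.injEq, not_and]
  intro _
  exact opp_ne d

/-- being a crossing state of the cut between columns 0 and 1 -/
def isCut {m : ℕ} (s : (ℤ × ZMod m) × Dir) : Prop :=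
  (s.1.1 = 0 ∧ s.2 = Dir.E) ∨ (s.1.1 = 1 ∧ s.2 = Dir.W)

instance {m : ℕ} (s : (ℤ × ZMod m) × Dir) : Decidable (isCut s) := by
  unfold isCut; infer_instance

lemma isCut_rho {m : ℕ} (s : (ℤ × ZMod m) × Dir) : isCut (rho s) ↔ isCut s := by
  obtain ⟨⟨x, y⟩, d⟩ := s
  cases d <;> simp [isCut, rho, moveC, opp] <;> omega

end Cyl

lemma even_card_of_involution {α : Type*} [Fintype α] [DecidableEq α] (f : α → α)
    (h2 : ∀ a, f (f a) = a) (h1 : ∀ a, f a ≠ a) : Even (Fintype.card α) := by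
  have main : ∀ s : Finset α, (∀ a ∈ s, f a ∈ s) → Even s.card := by
    intro s
    induction s using Finset.strongInduction with
    | _ s ih =>
      intro hcl
      rcases s.eq_empty_or_nonempty with rfl | ⟨a, ha⟩
      · simp
      · have hfa : f a ∈ s := hcl a ha
        have hane : a ≠ f a := fun h => h1 a h.symm
        have hpair : ({a, f a} : Finset α) ⊆ s := by
          intro b hb
          rcases Finset.mem_insert.mp hb with rfl | hb
          · exact ha
          · rcases Finset.mem_singleton.mp hb with rfl; exact hfa
        have hpc : ({a, f a} : Finset α).card = 2 := Finset.card_pair hane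
        set t := s \ {a, f a} with ht
        have hss : t ⊂ s := by
          apply Finset.sdiff_ssubset hpair
          exact ⟨a, Finset.mem_insert_self _ _⟩
        have hclt : ∀ b ∈ t, f b ∈ t := by
          intro b hb
          obtain ⟨hbs, hbn⟩ := Finset.mem_sdiff.mp hb
          refine Finset.mem_sdiff.mpr ⟨hcl b hbs, ?_⟩
          simp only [Finset.mem_insert, Finset.mem_singleton] at hbn ⊢
          push_neg at hbn ⊢
          constructor
          · intro h; exact hbn.2 (by rw [← h2 b, h])
          · intro h; exact hbn.1 (by rw [← h2 b, h, h2])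
        have hev := ih t hss hclt
        have hcard : t.card = s.card - 2 := by rw [ht, Finset.card_sdiff_of_subset hpair, hpc]
        have hle : 2 ≤ s.card := hpc ▸ Finset.card_le_card hpair
        obtain ⟨w, hw⟩ := hev
        exact ⟨w + 1, by omega⟩
  have := main Finset.univ (fun a _ => Finset.mem_univ _)
  rwa [Finset.card_univ] at this

theorem exists_escape (n : ℕ) (c : ℤ × ZMod (2*n+1) → Mirror) :
    ∃ (j : ZMod (2*n+1)) (k : ℕ),
      (n : ℤ) < |(((stepC c)^[k] (((0 : ℤ), j), Dir.E)).1.1)| := by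
  classical
  haveI : NeZero (2*n+1) := ⟨by omega⟩
  by_contra hcon
  push_neg at hcon
  set F := stepC c with hF
  set st : ZMod (2*n+1) → (ℤ × ZMod (2*n+1)) × Dir :=
    fun j => (((0 : ℤ), j), Dir.E) with hst
  have hFinj : Function.Injective F := stepC_injective c
  have hFkinj : ∀ k, Function.Injective F^[k] := fun k => hFinj.iterate k
  -- periodicity
  have hper : ∀ j, ∃ T, 0 < T ∧ F^[T] (st j) = st j := by
    intro j
    have hfin : Set.Finite {u : (ℤ × ZMod (2*n+1)) × Dir | |u.1.1| ≤ (n : ℤ)} := by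
      apply Set.Finite.subset (Finset.finite_toSet
        ((Finset.Icc (-(n:ℤ)) n ×ˢ (Finset.univ : Finset (ZMod (2*n+1)))) ×ˢ
          (Finset.univ : Finset Dir)))
      intro u hu
      simp only [Set.mem_setOf_eq, abs_le] at hu
      simp [Finset.mem_product, Finset.mem_Icc, hu.1, hu.2]
    have hmap : Set.MapsTo (fun k : ℕ => F^[k] (st j)) Set.univ
        {u : (ℤ × ZMod (2*n+1)) × Dir | |u.1.1| ≤ (n : ℤ)} := by
      intro k _
      exact hcon j k
    obtain ⟨k, -, k', -, hne, heq⟩ :=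
      Set.infinite_univ.exists_ne_map_eq_of_mapsTo hmap hfin
    have key : ∀ a b : ℕ, a < b → F^[a] (st j) = F^[b] (st j) →
        ∃ T, 0 < T ∧ F^[T] (st j) = st j := by
      intro a b hab he
      refine ⟨b - a, by omega, ?_⟩
      apply hFkinj a
      have : F^[a] (F^[b-a] (st j)) = F^[a + (b-a)] (st j) :=
        (Function.iterate_add_apply F a (b-a) (st j)).symm
      rw [this]
      have hba : a + (b - a) = b := by omega
      rw [hba, ← he]
    rcases hne.lt_or_gt with h | h
    · exact key k k' h heq
    · exact key k' k h heq.symm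
  -- minimal return time to the cut
  have hex : ∀ j, ∃ k, 0 < k ∧ isCut (F^[k] (st j)) := by
    intro j
    obtain ⟨T, hT, hTeq⟩ := hper j
    exact ⟨T, hT, by rw [hTeq]; left; exact ⟨rfl, rfl⟩⟩
  set kk : ZMod (2*n+1) → ℕ := fun j => Nat.find (hex j) with hkk
  have hkpos : ∀ j, 0 < kk j := fun j => (Nat.find_spec (hex j)).1
  have hkcut : ∀ j, isCut (F^[kk j] (st j)) := fun j => (Nat.find_spec (hex j)).2
  have hkmin : ∀ j i, 0 < i → i < kk j → ¬ isCut (F^[i] (st j)) := by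
    intro j i hi hik hcut
    exact Nat.find_min (hex j) hik ⟨hi, hcut⟩
  -- the x-coordinate step relation
  have hstepx : ∀ s : (ℤ × ZMod (2*n+1)) × Dir,
      (F s).1.1 = s.1.1 ∨ ((F s).1.1 = s.1.1 + 1 ∧ s.2 = Dir.E)
        ∨ ((F s).1.1 = s.1.1 - 1 ∧ s.2 = Dir.W) := by
    intro ⟨v, d⟩
    cases d <;> simp [hF, stepC, moveC]
  -- Claim A : first return to the cut is a westward crossing
  have hclaimA : ∀ j, (F^[kk j] (st j)).1.1 = 1 ∧ (F^[kk j] (st j)).2 = Dir.W := by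
    intro j
    rcases hkcut j with h | h
    swap
    · exact h
    exfalso
    -- eastward case: x (kk j) = 0 while x 1 = 1
    set x : ℕ → ℤ := fun i => (F^[i] (st j)).1.1 with hx
    have hx0 : x 0 = 0 := rfl
    have hx1 : x 1 = 1 := by
      simp [hx, hst, hF, stepC, moveC]
    have hxk : x (kk j) = 0 := h.1
    have hk1 : kk j ≠ 1 := by
      intro hk
      rw [hk] at hxk
      omega
    have hkge : 1 < kk j := by
      have := hkpos j
      omega
    -- find the westward crossing
    have hexq : ∃ i, 1 < i ∧ i ≤ kk j ∧ x i ≤ 0 := ⟨kk j, hkge, le_refl _, by omega⟩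
    set i' := Nat.find hexq with hi'
    obtain ⟨hi'1, hi'k, hi'x⟩ := Nat.find_spec hexq
    set i := i' - 1 with hidef
    have hi1 : 1 ≤ i := by
      have := hi'1; omega
    have hik : i < kk j := by omega
    have hxi : 1 ≤ x i := by
      rcases eq_or_lt_of_le hi1 with heq | hlt
      · rw [← heq]; omega
      · by_contra hle
        push_neg at hle
        have : ¬ (1 < i ∧ i ≤ kk j ∧ x i ≤ 0) := Nat.find_min hexq (by omega)
        push_neg at this
        have := this hlt (by omega)
        omega
    have hxi1 : x (i + 1) ≤ 0 := by
      have : i + 1 = i' := by omega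
      rw [this]; exact hi'x
    have hstep := hstepx (F^[i] (st j))
    rw [← Function.iterate_succ_apply' F i (st j)] at hstep
    change (x (i+1) = x i ∨ (x (i+1) = x i + 1 ∧ (F^[i] (st j)).2 = Dir.E)
      ∨ (x (i+1) = x i - 1 ∧ (F^[i] (st j)).2 = Dir.W)) at hstep
    rcases hstep with h1 | ⟨h1, _⟩ | ⟨h1, hd⟩
    · omega
    · omega
    · have hxieq : x i = 1 := by omega
      exact hkmin j i (by omega) hik (Or.inr ⟨hxieq, hd⟩)
  -- definition of the involution
  set σ : ZMod (2*n+1) → ZMod (2*n+1) := fun j => (F^[kk j] (st j)).1.2 with hσ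
  have hσeq : ∀ j, F^[kk j] (st j) = (((1 : ℤ), σ j), Dir.W) := by
    intro j
    obtain ⟨h1, h2⟩ := hclaimA j
    exact Prod.ext (Prod.ext h1 rfl) h2
  have hrst : ∀ j, rho (st j) = (((1 : ℤ), j), Dir.W) := by
    intro j; simp [rho, hst, moveC, opp]
  have hrw : ∀ j : ZMod (2*n+1), rho ((((1 : ℤ), j), Dir.W) : (ℤ × ZMod (2*n+1)) × Dir)
      = st j := by
    intro j; simp [rho, hst, moveC, opp]
  -- the trajectory from st (σ j) is the reversal
  have htraj : ∀ j, ∀ i ≤ kk j, F^[i] (st (σ j)) = rho (F^[kk j - i] (st j)) := by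
    intro j i hi
    have h1 : st (σ j) = rho (F^[kk j] (st j)) := by rw [hσeq j, hrw]
    have h2 : F^[kk j] (st j) = F^[i] (F^[kk j - i] (st j)) := by
      rw [← Function.iterate_add_apply]
      congr 1
      omega
    rw [h1, h2, iter_rho_iter]
  have hkσ : ∀ j, kk (σ j) = kk j ∧ F^[kk (σ j)] (st (σ j)) = (((1 : ℤ), j), Dir.W) := by
    intro j
    have hPk : isCut (F^[kk j] (st (σ j))) := by
      rw [htraj j (kk j) le_rfl]
      simp only [Nat.sub_self, Function.iterate_zero, id_eq]
      rw [hrst j]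
      right; exact ⟨rfl, rfl⟩
    have hle : kk (σ j) ≤ kk j := Nat.find_le ⟨hkpos j, hPk⟩
    have hnotlt : ¬ kk (σ j) < kk j := by
      intro hlt
      have hcutσ := hkcut (σ j)
      rw [htraj j (kk (σ j)) (le_of_lt hlt), isCut_rho] at hcutσ
      exact hkmin j (kk j - kk (σ j)) (by omega) (by have := hkpos (σ j); omega) hcutσ
    have hkeq : kk (σ j) = kk j := by omega
    refine ⟨hkeq, ?_⟩
    rw [hkeq, htraj j (kk j) le_rfl]
    simp only [Nat.sub_self, Function.iterate_zero, id_eq]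
    exact hrst j
  have hinv : ∀ j, σ (σ j) = j := by
    intro j
    have := (hkσ j).2
    have h2 : σ (σ j) = (F^[kk (σ j)] (st (σ j))).1.2 := rfl
    rw [this] at h2
    exact h2
  have hnofix : ∀ j, σ j ≠ j := by
    intro j hfix
    have hru : F^[kk j] (st j) = rho (st j) := by
      rw [hσeq j, hfix, hrst j]
    rcases Nat.even_or_odd (kk j) with ⟨b, hb⟩ | ⟨b, hb⟩
    · -- even case : rho has a fixed point
      have h1 : F^[b] (rho (F^[b] (st j))) = rho (st j) := iter_rho_iter c b (st j)
      have h2 : F^[b] (F^[b] (st j)) = rho (st j) := by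
        rw [← Function.iterate_add_apply, ← hb, hru]
      have h3 : rho (F^[b] (st j)) = F^[b] (st j) := hFkinj b (h1.trans h2.symm)
      exact rho_ne _ h3
    · -- odd case : F ∘ rho has a fixed point
      have h1 : F^[b] (rho (F^[b] (F^[b+1] (st j)))) = rho (F^[b+1] (st j)) :=
        iter_rho_iter c b (F^[b+1] (st j))
      have h2 : F^[b] (F^[b+1] (st j)) = F^[kk j] (st j) := by
        rw [← Function.iterate_add_apply]
        congr 1
        omega
      rw [h2, hru, rho_rho] at h1
      have h3 : F (rho (F^[b+1] (st j))) = F (F^[b] (st j)) := by rw [h1]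
      rw [← Function.iterate_succ_apply' F b (st j)] at h3
      exact step_rho_ne c (F^[b+1] (st j)) h3
  have heven := even_card_of_involution σ hinv hnofix
  rw [ZMod.card (2*n+1)] at heven
  obtain ⟨t, ht⟩ := heven
  omega

/-- representative of a residue class, in `[-n, n]` -/
def rep (n : ℕ) (y : ZMod (2*n+1)) : ℤ :=
  if (y.val : ℤ) ≤ n then (y.val : ℤ) else (y.val : ℤ) - (2*n+1)

lemma rep_abs (n : ℕ) (y : ZMod (2*n+1)) : |rep n y| ≤ (n : ℤ) := by
  haveI : NeZero (2*n+1) := ⟨by omega⟩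
  have h := ZMod.val_lt y
  have h' : (y.val : ℤ) < 2*n+1 := by exact_mod_cast h
  have h0 : (0 : ℤ) ≤ (y.val : ℤ) := Int.natCast_nonneg _
  unfold rep
  split <;> rw [abs_le] <;> omega

lemma rep_cast (n : ℕ) (y : ZMod (2*n+1)) : ((rep n y : ℤ) : ZMod (2*n+1)) = y := by
  haveI : NeZero (2*n+1) := ⟨by omega⟩
  have hv : ((y.val : ℤ) : ZMod (2*n+1)) = y := by
    push_cast
    exact ZMod.natCast_rightInverse y
  unfold rep
  split
  · exact hv
  · have h21 : (((2*n+1 : ℕ) : ℤ) : ZMod (2*n+1)) = 0 := by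
      rw [Int.cast_natCast, ZMod.natCast_self]
    have he : ((y.val : ℤ) - (2*(n:ℤ)+1)) = ((y.val : ℤ) - ((2*n+1 : ℕ) : ℤ)) := by
      push_cast; ring
    rw [he, Int.cast_sub, h21, sub_zero]
    exact hv

lemma cast_inj_small (n : ℕ) (a b : ℤ) (ha : |a| ≤ (n:ℤ)) (hb : |b| ≤ (n:ℤ))
    (h : (a : ZMod (2*n+1)) = (b : ZMod (2*n+1))) : a = b := by
  rw [ZMod.intCast_eq_intCast_iff] at h
  have hd : ((2*n+1 : ℕ) : ℤ) ∣ b - a := Int.ModEq.dvd h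
  have : b - a = 0 := by
    apply Int.eq_zero_of_abs_lt_dvd hd
    rw [abs_le] at ha hb
    rw [abs_lt]
    push_cast
    omega
  omega

lemma rep_cast_self (n : ℕ) (y : ℤ) (hy : |y| ≤ (n:ℤ)) :
    rep n ((y : ZMod (2*n+1))) = y := by
  apply cast_inj_small n _ _ (rep_abs n _) hy
  rw [rep_cast]

/-- the cylinder configuration induced by a planar configuration -/
def barc (n : ℕ) (c : ℤ × ℤ → Mirror) : ℤ × ZMod (2*n+1) → Mirror :=
  fun v => c (v.1, rep n v.2)

/-- projection of a planar state to the cylinder -/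
def projS (n : ℕ) (s : (ℤ × ℤ) × Dir) : (ℤ × ZMod (2*n+1)) × Dir :=
  ((s.1.1, (s.1.2 : ZMod (2*n+1))), s.2)

lemma proj_move (n : ℕ) (v : ℤ × ℤ) (d : Dir) :
    moveC ((v.1, (v.2 : ZMod (2*n+1)))) d = ((moveZ v d).1, ((moveZ v d).2 : ZMod (2*n+1))) := by
  cases d <;> simp [moveC, moveZ] <;> push_cast <;> ring

lemma coupling (n : ℕ) (c : ℤ × ℤ → Mirror)
    (hH : ∀ i, ((stepZ c)^[i] (((0,0) : ℤ × ℤ), Dir.E)).1 ∈ Q n) (k : ℕ) :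
    (stepC (barc n c))^[k] ((((0:ℤ), (0 : ZMod (2*n+1)))), Dir.E)
      = projS n ((stepZ c)^[k] (((0,0) : ℤ × ℤ), Dir.E)) := by
  induction k with
  | zero =>
      simp [projS]
  | succ k ih =>
      rw [Function.iterate_succ_apply', Function.iterate_succ_apply', ih]
      set u := (stepZ c)^[k] (((0,0) : ℤ × ℤ), Dir.E) with hu
      obtain ⟨⟨a, b⟩, d⟩ := u
      have hQ : moveZ (a, b) d ∈ Q n := by
        have := hH (k+1)
        rw [Function.iterate_succ_apply', ← hu] at this
        exact this
      have hy : |(moveZ (a,b) d).2| ≤ (n : ℤ) := hQ.2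
      simp only [stepC, stepZ, projS]
      rw [proj_move n (a,b) d]
      have hbar : barc n c ((moveZ (a,b) d).1, ((moveZ (a,b) d).2 : ZMod (2*n+1)))
          = c (moveZ (a,b) d) := by
        unfold barc
        rw [rep_cast_self n _ hy]
      rw [hbar]

-- ===== vertical shift equivariance on the cylinder =====

lemma shift_step {m : ℕ} (d : ℤ × ZMod m → Mirror) (j : ZMod m)
    (s : (ℤ × ZMod m) × Dir) :
    stepC d (((s.1.1, s.1.2 + j), s.2)) =
      (((stepC (fun v => d (v.1, v.2 + j)) s).1.1,
        (stepC (fun v => d (v.1, v.2 + j)) s).1.2 + j),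
        (stepC (fun v => d (v.1, v.2 + j)) s).2) := by
  obtain ⟨⟨x, y⟩, dir⟩ := s
  have hmv : moveC ((x, y + j)) dir =
      (((moveC ((x,y)) dir).1, (moveC ((x,y)) dir).2 + j)) := by
    cases dir <;> simp [moveC] <;> ring
  simp only [stepC, hmv]

lemma shift_traj {m : ℕ} (d : ℤ × ZMod m → Mirror) (j : ZMod m) (k : ℕ)
    (s : (ℤ × ZMod m) × Dir) :
    (stepC d)^[k] (((s.1.1, s.1.2 + j), s.2)) =
      ((((stepC (fun v => d (v.1, v.2 + j)))^[k] s).1.1,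
        ((stepC (fun v => d (v.1, v.2 + j)))^[k] s).1.2 + j),
        ((stepC (fun v => d (v.1, v.2 + j)))^[k] s).2) := by
  induction k generalizing s with
  | zero => rfl
  | succ k ih =>
      rw [Function.iterate_succ_apply, Function.iterate_succ_apply, shift_step, ih]

-- ===== the escape events and the permutation of configurations =====


/-- the event that the cylinder ray started at height `j` escapes the slab -/
def esc (n : ℕ) (j : ZMod (2*n+1)) (c : ℤ × ℤ → Mirror) : Prop :=
  ∃ k : ℕ, (n : ℤ) < |(((stepC (barc n c))^[k] ((((0:ℤ), j)), Dir.E)).1.1)|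

/-- permutation of `ℤ` implementing the vertical rotation of the cylinder -/
def pj (n : ℕ) (j : ZMod (2*n+1)) : ℤ → ℤ :=
  fun y => if |y| ≤ (n : ℤ) then rep n ((y : ZMod (2*n+1)) + j) else y

lemma pj_inv (n : ℕ) (j : ZMod (2*n+1)) (y : ℤ) : pj n j (pj n (-j) y) = y := by
  unfold pj
  by_cases hy : |y| ≤ (n:ℤ)
  · rw [if_pos hy]
    have h1 : |rep n ((y : ZMod (2*n+1)) + -j)| ≤ (n:ℤ) := rep_abs n _
    rw [if_pos h1, rep_cast]
    have : (y : ZMod (2*n+1)) + -j + j = (y : ZMod (2*n+1)) := by ring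
    rw [this, rep_cast_self n y hy]
  · rw [if_neg hy, if_neg hy]

/-- the permutation of `ℤ × ℤ` (identity on first coordinate) -/
def pjE (n : ℕ) (j : ZMod (2*n+1)) : (ℤ × ℤ) ≃ (ℤ × ℤ) where
  toFun v := (v.1, pj n j v.2)
  invFun v := (v.1, pj n (-j) v.2)
  left_inv v := by
    have := pj_inv n (-j) v.2
    rw [neg_neg] at this
    simp [this]
  right_inv v := by simp [pj_inv n j v.2]

/-- precomposition of a configuration with the permutation -/
def Tmap (n : ℕ) (j : ZMod (2*n+1)) (c : ℤ × ℤ → Mirror) : ℤ × ℤ → Mirror :=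
  fun v => c (pjE n j v)

lemma barc_Tmap (n : ℕ) (j : ZMod (2*n+1)) (c : ℤ × ℤ → Mirror)
    (v : ℤ × ZMod (2*n+1)) :
    barc n (Tmap n j c) v = barc n c (v.1, v.2 + j) := by
  unfold barc Tmap
  show c (v.1, pj n j (rep n v.2)) = _
  unfold pj
  rw [if_pos (rep_abs n v.2), rep_cast]

lemma esc_iff (n : ℕ) (j : ZMod (2*n+1)) (c : ℤ × ℤ → Mirror) :
    esc n j c ↔ esc n 0 (Tmap n j c) := by
  unfold esc
  have hkey : ∀ k : ℕ,
      ((stepC (barc n c))^[k] ((((0:ℤ), j)), Dir.E)).1.1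
        = ((stepC (barc n (Tmap n j c)))^[k] ((((0:ℤ), (0 : ZMod (2*n+1)))), Dir.E)).1.1 := by
    intro k
    have hc : barc n (Tmap n j c) = fun v => barc n c (v.1, v.2 + j) :=
      funext (barc_Tmap n j c)
    rw [hc]
    have := shift_traj (barc n c) j k ((((0:ℤ), (0 : ZMod (2*n+1)))), Dir.E)
    simp only [zero_add] at this
    rw [this]
  constructor
  · rintro ⟨k, hk⟩; exact ⟨k, by rwa [← hkey]⟩
  · rintro ⟨k, hk⟩; exact ⟨k, by rwa [hkey]⟩

-- ===== measurability =====

lemma measurableSet_mirror (s : Set Mirror) : MeasurableSet s :=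
  MeasurableSpace.measurableSet_top

lemma meas_state (n : ℕ) (k : ℕ) (s0 u : (ℤ × ZMod (2*n+1)) × Dir) :
    MeasurableSet {c : ℤ × ℤ → Mirror | (stepC (barc n c))^[k] s0 = u} := by
  haveI : NeZero (2*n+1) := ⟨by omega⟩
  induction k generalizing u with
  | zero =>
      simp only [Function.iterate_zero, id_eq]
      rcases eq_or_ne s0 u with h | h
      · have : {c : ℤ × ℤ → Mirror | s0 = u} = Set.univ := by ext; simp [h]
        rw [this]; exact MeasurableSet.univ
      · have : {c : ℤ × ℤ → Mirror | s0 = u} = ∅ := by ext; simp [h]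
        rw [this]; exact MeasurableSet.empty
  | succ k ih =>
      have hdec : {c : ℤ × ℤ → Mirror | (stepC (barc n c))^[k+1] s0 = u}
          = ⋃ u' : (ℤ × ZMod (2*n+1)) × Dir,
            ({c | (stepC (barc n c))^[k] s0 = u'} ∩ {c | stepC (barc n c) u' = u}) := by
        ext c
        simp only [Set.mem_setOf_eq, Set.mem_iUnion, Set.mem_inter_iff]
        constructor
        · intro h
          refine ⟨(stepC (barc n c))^[k] s0, rfl, ?_⟩
          rw [← Function.iterate_succ_apply' (stepC (barc n c)) k s0]
          exact h
        · rintro ⟨u', h1, h2⟩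
          rw [Function.iterate_succ_apply', h1, h2]
      rw [hdec]
      apply MeasurableSet.iUnion
      intro u'
      apply (ih u').inter
      have : {c : ℤ × ℤ → Mirror | stepC (barc n c) u' = u}
          = (fun c : ℤ × ℤ → Mirror => c ((moveC u'.1 u'.2).1, rep n (moveC u'.1 u'.2).2)) ⁻¹'
            {md : Mirror | (moveC u'.1 u'.2, reflect md u'.2) = u} := by
        ext c
        simp [stepC, barc]
      rw [this]
      exact (measurable_pi_apply _) (measurableSet_mirror _)

lemma esc_measurable (n : ℕ) (j : ZMod (2*n+1)) :
    MeasurableSet {c : ℤ × ℤ → Mirror | esc n j c} := by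
  haveI : NeZero (2*n+1) := ⟨by omega⟩
  have : {c : ℤ × ℤ → Mirror | esc n j c}
      = ⋃ k : ℕ, ⋃ u ∈ {u : (ℤ × ZMod (2*n+1)) × Dir | (n:ℤ) < |u.1.1|},
          {c | (stepC (barc n c))^[k] ((((0:ℤ), j)), Dir.E) = u} := by
    ext c
    simp only [Set.mem_setOf_eq, Set.mem_iUnion, esc]
    constructor
    · rintro ⟨k, hk⟩
      exact ⟨k, _, hk, rfl⟩
    · rintro ⟨k, u, hu, hc⟩
      exact ⟨k, by rw [hc]; exact hu⟩
  rw [this]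
  exact MeasurableSet.iUnion fun k =>
    MeasurableSet.biUnion (Set.to_countable _) fun u _ => meas_state n k _ u

-- ===== measure invariance under permutations of sites =====

namespace MirrorAux

open MeasureTheory ProbabilityTheory

def cylSet (S : Finset (ℤ × ℤ)) (f : ℤ × ℤ → Mirror) : Set ((ℤ × ℤ) → Mirror) :=
  {c | ∀ v ∈ S, c v = f v}

def cylC : Set (Set ((ℤ × ℤ) → Mirror)) := {s | ∃ S f, s = cylSet S f}

lemma cylSet_eq_iInter (S : Finset (ℤ × ℤ)) (f : ℤ × ℤ → Mirror) :
    cylSet S f = ⋂ v ∈ S, (fun c : (ℤ × ℤ) → Mirror => c v) ⁻¹' {f v} := by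
  ext c; simp [cylSet]

lemma cylSet_meas (S : Finset (ℤ × ℤ)) (f : ℤ × ℤ → Mirror) :
    MeasurableSet (cylSet S f) := by
  rw [cylSet_eq_iInter]
  exact MeasurableSet.biInter (Set.to_countable _)
    (fun v _ => (measurable_pi_apply v) (measurableSet_mirror _))

lemma isPi_cylC : IsPiSystem cylC := by
  rintro s ⟨S1, f1, rfl⟩ t ⟨S2, f2, rfl⟩ hne
  obtain ⟨c0, hc01, hc02⟩ := hne
  refine ⟨S1 ∪ S2, c0, ?_⟩
  ext c
  simp only [Set.mem_inter_iff, cylSet, Set.mem_setOf_eq, Finset.mem_union]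
  constructor
  · rintro ⟨h1, h2⟩ v hv
    rcases hv with hv | hv
    · rw [h1 v hv, ← hc01 v hv]
    · rw [h2 v hv, ← hc02 v hv]
  · intro h
    constructor
    · intro v hv; rw [h v (Or.inl hv), hc01 v hv]
    · intro v hv; rw [h v (Or.inr hv), hc02 v hv]

lemma gen_eq :
    (inferInstance : MeasurableSpace ((ℤ × ℤ) → Mirror)) =
      MeasurableSpace.generateFrom cylC := by
  apply le_antisymm
  · have h : ∀ v : ℤ × ℤ,
        @Measurable _ _ (MeasurableSpace.generateFrom cylC) _
          (fun c : (ℤ × ℤ) → Mirror => c v) := by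
      intro v
      refine @measurable_to_countable' Mirror ((ℤ × ℤ) → Mirror) _ _
        (MeasurableSpace.generateFrom cylC) (fun c => c v) ?_
      intro a
      have : (fun c : (ℤ × ℤ) → Mirror => c v) ⁻¹' {a} = cylSet {v} (fun _ => a) := by
        ext c; simp [cylSet]
      rw [this]
      exact MeasurableSpace.measurableSet_generateFrom ⟨{v}, fun _ => a, rfl⟩
    exact iSup_le fun v => measurable_iff_comap_le.mp (h v)
  · exact MeasurableSpace.generateFrom_le (by rintro s ⟨S, f, rfl⟩; exact cylSet_meas S f)

variable (μ : Measure ((ℤ × ℤ) → Mirror)) [IsProbabilityMeasure μ]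

lemma mu_cyl
    (hind : iIndepFun (fun v (c : (ℤ × ℤ) → Mirror) => c v) μ)
    (S : Finset (ℤ × ℤ)) (f : ℤ × ℤ → Mirror) :
    μ (cylSet S f) = ∏ v ∈ S, μ {c | c v = f v} := by
  have h := (iIndepFun_iff_measure_inter_preimage_eq_mul.mp hind) S
    (sets := fun v => ({f v} : Set Mirror)) (fun i _ => measurableSet_mirror _)
  rw [cylSet_eq_iInter]
  rw [h]; rfl

lemma map_precomp
    (hind : iIndepFun (fun v (c : (ℤ × ℤ) → Mirror) => c v) μ)
    (q : Mirror → ENNReal) (hq : ∀ (v : ℤ × ℤ) (a : Mirror), μ {c | c v = a} = q a)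
    (σ : (ℤ × ℤ) ≃ (ℤ × ℤ)) :
    μ.map (fun c : (ℤ × ℤ) → Mirror => fun v => c (σ v)) = μ := by
  have hmeas : Measurable (fun c : (ℤ × ℤ) → Mirror => fun v => c (σ v)) :=
    measurable_pi_lambda _ fun v => measurable_pi_apply (σ v)
  haveI : IsProbabilityMeasure (μ.map (fun c : (ℤ × ℤ) → Mirror => fun v => c (σ v))) :=
    Measure.isProbabilityMeasure_map hmeas.aemeasurable
  apply ext_of_generate_finite cylC gen_eq isPi_cylC
  · rintro s ⟨S, f, rfl⟩
    rw [Measure.map_apply hmeas (cylSet_meas S f)]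
    have hpre : (fun c : (ℤ × ℤ) → Mirror => fun v => c (σ v)) ⁻¹' cylSet S f
        = cylSet (S.image σ) (fun w => f (σ.symm w)) := by
      ext c
      simp only [cylSet, Set.mem_preimage, Set.mem_setOf_eq, Finset.mem_image]
      constructor
      · rintro h w ⟨v, hv, rfl⟩
        rw [Equiv.symm_apply_apply]
        exact h v hv
      · intro h v hv
        have := h (σ v) ⟨v, hv, rfl⟩
        rwa [Equiv.symm_apply_apply] at this
    rw [hpre, mu_cyl μ hind, mu_cyl μ hind,
      Finset.prod_image (fun a _ b _ h => σ.injective h)]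
    apply Finset.prod_congr rfl
    intro v _
    rw [Equiv.symm_apply_apply, hq, hq]
  · simp [Measure.map_apply hmeas MeasurableSet.univ]

end MirrorAux

/-- Main theorem: in the Lorentz mirror model on `ℤ²` with i.i.d. mirror
designations of density `p ∈ (0,1]` (NW and NE mirrors with probability `p/2`
each), the light ray started at the origin escapes the box `Q(n) = [-n,n]²`
with probability at least `1/(2n+1)`. -/
theorem escape_probability_lower_bound (n : ℕ) (hn : 1 ≤ n) (p : ℝ)
    (hp : 0 < p) (hp1 : p ≤ 1)
    (μ : Measure ((ℤ × ℤ) → Mirror)) [IsProbabilityMeasure μ]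
    (hind : ProbabilityTheory.iIndepFun
      (fun v (c : (ℤ × ℤ) → Mirror) => c v) μ)
    (hno : ∀ v, μ {c | c v = Mirror.no} = ENNReal.ofReal (1 - p))
    (hNW : ∀ v, μ {c | c v = Mirror.NW} = ENNReal.ofReal (p / 2))
    (hNE : ∀ v, μ {c | c v = Mirror.NE} = ENNReal.ofReal (p / 2)) :
    1 / (2 * n + 1 : ENNReal) ≤
      μ {c | ∃ k : ℕ, ((stepZ c)^[k] (((0, 0) : ℤ × ℤ), Dir.E)).1 ∉ Q n} := by
  classical
  haveI : NeZero (2*n+1) := ⟨by omega⟩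
  set q : Mirror → ENNReal := fun a => match a with
    | Mirror.no => ENNReal.ofReal (1 - p)
    | Mirror.NW => ENNReal.ofReal (p / 2)
    | Mirror.NE => ENNReal.ofReal (p / 2) with hqdef
  have hq : ∀ (v : ℤ × ℤ) (a : Mirror), μ {c | c v = a} = q a := by
    intro v a
    cases a
    · exact hno v
    · exact hNW v
    · exact hNE v
  -- the escape events on the cylinder all have the same probability
  have hAj : ∀ j : ZMod (2*n+1), μ {c | esc n j c} = μ {c | esc n 0 c} := by
    intro j
    have hTm : Measurable (Tmap n j) :=
      measurable_pi_lambda _ fun v => measurable_pi_apply _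
    have hset : {c | esc n j c} = Tmap n j ⁻¹' {c | esc n 0 c} := by
      ext c
      simp only [Set.mem_setOf_eq, Set.mem_preimage]
      exact esc_iff n j c
    rw [hset, ← Measure.map_apply hTm (esc_measurable n 0)]
    have hmap : μ.map (Tmap n j) = μ :=
      MirrorAux.map_precomp μ hind q hq (pjE n j)
    rw [hmap]
  -- the union of the escape events is everything
  have hcover : (Set.univ : Set ((ℤ × ℤ) → Mirror))
      ⊆ ⋃ j : ZMod (2*n+1), {c | esc n j c} := by
    intro c _
    obtain ⟨j, k, hk⟩ := exists_escape n (barc n c)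
    exact Set.mem_iUnion.mpr ⟨j, k, hk⟩
  have hsum : (1 : ENNReal) ≤ ((2*n+1 : ℕ) : ENNReal) * μ {c | esc n 0 c} := by
    calc (1 : ENNReal) = μ Set.univ := (measure_univ).symm
      _ ≤ μ (⋃ j : ZMod (2*n+1), {c | esc n j c}) := measure_mono hcover
      _ ≤ ∑' j : ZMod (2*n+1), μ {c | esc n j c} := measure_iUnion_le _
      _ = ∑ j : ZMod (2*n+1), μ {c | esc n j c} := tsum_fintype _
      _ = ∑ _j : ZMod (2*n+1), μ {c | esc n 0 c} := by
          apply Finset.sum_congr rfl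
          intro j _
          exact hAj j
      _ = ((2*n+1 : ℕ) : ENNReal) * μ {c | esc n 0 c} := by
          rw [Finset.sum_const, Finset.card_univ, ZMod.card, nsmul_eq_mul]
  -- the escape event implies escape from the box, by the coupling
  have hsub : {c | esc n 0 c}
      ⊆ {c | ∃ k : ℕ, ((stepZ c)^[k] (((0, 0) : ℤ × ℤ), Dir.E)).1 ∉ Q n} := by
    intro c hc
    by_contra hnot
    simp only [Set.mem_setOf_eq, not_exists, not_not] at hnot
    obtain ⟨k, hk⟩ := hc
    rw [coupling n c hnot k] at hk
    have hx : ((stepZ c)^[k] (((0,0) : ℤ × ℤ), Dir.E)).1 ∈ Q n := hnot k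
    have : |(projS n ((stepZ c)^[k] (((0,0) : ℤ × ℤ), Dir.E))).1.1| ≤ (n : ℤ) := hx.1
    omega
  -- conclusion
  have hfin : 1 / (2 * (n : ENNReal) + 1) ≤ μ {c | esc n 0 c} := by
    rw [ENNReal.div_le_iff_le_mul (Or.inl (fun h => by simp at h)) (Or.inl (by finiteness))]
    calc (1 : ENNReal) ≤ ((2*n+1 : ℕ) : ENNReal) * μ {c | esc n 0 c} := hsum
      _ = μ {c | esc n 0 c} * (2 * (n : ENNReal) + 1) := by
          rw [mul_comm]
          congr 1
          push_cast
          ring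
  exact le_trans hfin (measure_mono hsub)
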